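/- Let c₂, c₃ ∈ ℝ, c₁ = 1 + c₂², and let v¹, v², v³ be as in the general solution for r = 1: Q₀(s) = c₁ + (s + c₃)², v¹(s) = −2(s + c₃)/Q₀(s), v²(s) = 1 − 2/Q₀(s), v³(s) = 2c₂/Q₀(s). Let a, b be nonzero real constants and let f : ℝ² → ℝ⁴ be the generalized Dini surface built from (v¹, v², v³, r = 1, a, b). Define E(s,φ) = ⟨∂f/∂s, ∂f/∂s⟩, F(s,φ) = ⟨∂f/∂s, ∂f/∂φ⟩, G(s,φ) = ⟨∂f/∂φ, ∂f/∂φ⟩. Then, with P(s) = 4(s + c₃)²/Q₀(s)² and Q(s) = 4(a² + b²c₂²)/Q₀(s)², one has E = P, F = a·P, and G = a²·P + Q; i.e., the first fundamental form is g = P·(ds + a·dφ)² + Q·dφ². -/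

import Mathlib

/-
Write `f(s, φ) = R(φ) c(s)`. The rotation `R(φ)` is orthogonal and `R'(φ) = R(φ) J` for the
constant skew matrix `J` with blocks `a·[0 -1; 1 0]` and `b·[0 -1; 1 0]`. The profile curve itself
is `c(s) = R₁(s) w(s)` with `w = (r - v², v¹, v³, 0)` and `R₁` the rotation of the first
coordinate plane through `s / r`, which commutes with `J`. Hence, with `J₁` the generator of `R₁`,
`∂f/∂s = R(φ) R₁(s) (J₁ w + w')` and `∂f/∂φ = R(φ) R₁(s) (J w)`, so by orthogonality `E`, `F`, `G`
are dot products of explicit vectors built from `v`, `v'`. For the explicit solution these are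
rational functions of `s` which collapse to `P`, `a P` and `a² P + Q` once `c₁ = 1 + c₂²`.
-/

/-- The generalized Dini surface built from functions `v1, v2, v3`, radius `r`
and screw-rotation constants `a, b`: `f(s,φ) = R(φ)·c(s)` where `R(φ)` is the
block-diagonal rotation with angles `aφ` and `bφ`. -/
noncomputable def diniSurface (v1 v2 v3 : ℝ → ℝ) (r a b : ℝ) :
    ℝ → ℝ → EuclideanSpace ℝ (Fin 4) :=
  fun s φ => (WithLp.equiv 2 (Fin 4 → ℝ)).symm
    (Matrix.mulVec
      !![Real.cos (a * φ), -Real.sin (a * φ), 0, 0;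
         Real.sin (a * φ),  Real.cos (a * φ), 0, 0;
         0, 0, Real.cos (b * φ), -Real.sin (b * φ);
         0, 0, Real.sin (b * φ),  Real.cos (b * φ)]
      ![r * Real.cos (s / r) - v1 s * Real.sin (s / r) - v2 s * Real.cos (s / r),
        r * Real.sin (s / r) + v1 s * Real.cos (s / r) - v2 s * Real.sin (s / r),
        v3 s, 0])

open Real Matrix WithLp

noncomputable def screwRotation (a b θ : ℝ) : Matrix (Fin 4) (Fin 4) ℝ :=
  !![cos (a * θ), -sin (a * θ), 0, 0;
     sin (a * θ), cos (a * θ), 0, 0;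
     0, 0, cos (b * θ), -sin (b * θ);
     0, 0, sin (b * θ), cos (b * θ)]

def screwGenerator (a b : ℝ) : Matrix (Fin 4) (Fin 4) ℝ :=
  !![0, -a, 0, 0; a, 0, 0, 0; 0, 0, 0, -b; 0, 0, b, 0]

section Screw

variable (a b θ : ℝ)

theorem screwRotation_transpose_mul_self :
    (screwRotation a b θ)ᵀ * screwRotation a b θ = 1 := by
  have ha := sin_sq_add_cos_sq (a * θ)
  have hb := sin_sq_add_cos_sq (b * θ)
  ext i j
  fin_cases i <;> fin_cases j <;>
    simp [screwRotation, Matrix.mul_apply, Fin.sum_univ_four] <;> linarith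

theorem dotProduct_screwRotation_mulVec (x y : Fin 4 → ℝ) :
    screwRotation a b θ *ᵥ x ⬝ᵥ screwRotation a b θ *ᵥ y = x ⬝ᵥ y := by
  rw [dotProduct_mulVec, vecMul_mulVec, screwRotation_transpose_mul_self, vecMul_one]

theorem screwGenerator_mulVec_screwRotation_mulVec (c d : ℝ) (x : Fin 4 → ℝ) :
    screwGenerator a b *ᵥ screwRotation c d θ *ᵥ x =
      screwRotation c d θ *ᵥ screwGenerator a b *ᵥ x := by
  simp only [mulVec_mulVec]
  congr 1
  ext i j
  fin_cases i <;> fin_cases j <;>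
    simp [screwRotation, screwGenerator, Matrix.mul_apply, Fin.sum_univ_four] <;> ring

variable {a b θ}

theorem hasDerivAt_screwRotation_mulVec {w : ℝ → Fin 4 → ℝ} {w' : Fin 4 → ℝ}
    (hw : HasDerivAt w w' θ) :
    HasDerivAt (fun τ => screwRotation a b τ *ᵥ w τ)
      (screwRotation a b θ *ᵥ (screwGenerator a b *ᵥ w θ + w')) θ := by
  have hcos (c : ℝ) : HasDerivAt (fun τ => cos (c * τ)) (-sin (c * θ) * c) θ := by
    simpa using ((hasDerivAt_id θ).const_mul c).cos
  have hsin (c : ℝ) : HasDerivAt (fun τ => sin (c * τ)) (cos (c * θ) * c) θ := by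
    simpa using ((hasDerivAt_id θ).const_mul c).sin
  rw [hasDerivAt_pi] at hw ⊢
  intro i
  fin_cases i
  all_goals simp [screwRotation, screwGenerator, mulVec, dotProduct, Fin.sum_univ_four]
  · exact (((hcos a).mul (hw 0)).sub ((hsin a).mul (hw 1))).congr_deriv (by ring)
  · exact (((hsin a).mul (hw 0)).add ((hcos a).mul (hw 1))).congr_deriv (by ring)
  · exact (((hcos b).mul (hw 2)).sub ((hsin b).mul (hw 3))).congr_deriv (by ring)
  · exact (((hsin b).mul (hw 2)).add ((hcos b).mul (hw 3))).congr_deriv (by ring)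

end Screw

theorem HasDerivAt.const_mulVec {𝕜 m n : Type*} [NontriviallyNormedField 𝕜] [CompleteSpace 𝕜]
    [Fintype m] [Fintype n] (A : Matrix m n 𝕜) {w : 𝕜 → n → 𝕜} {w' : n → 𝕜} {t : 𝕜}
    (hw : HasDerivAt w w' t) :
    HasDerivAt (fun τ => A *ᵥ w τ) (A *ᵥ w') t :=
  (LinearMap.toContinuousLinearMap A.mulVecLin).hasFDerivAt.comp_hasDerivAt t hw

theorem HasDerivAt.toLp {𝕜 ι : Type*} [NontriviallyNormedField 𝕜] [Fintype ι] (p : ENNReal)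
    [Fact (1 ≤ p)] {w : 𝕜 → ι → 𝕜} {w' : ι → 𝕜} {t : 𝕜}
    (hw : HasDerivAt w w' t) :
    HasDerivAt (fun τ => toLp p (w τ)) (toLp p w') t :=
  (PiLp.hasStrictFDerivAt_toLp p (w t)).hasFDerivAt.comp_hasDerivAt t hw

/-- The profile curve `c(s)` of a Dini surface, in the frame obtained by turning the first
coordinate plane through the angle `s / r`. -/
def diniProfile (v1 v2 v3 : ℝ → ℝ) (r s : ℝ) : Fin 4 → ℝ :=
  ![r - v2 s, v1 s, v3 s, 0]

theorem diniSurface_eq (v1 v2 v3 : ℝ → ℝ) (r a b s φ : ℝ) :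
    diniSurface v1 v2 v3 r a b s φ =
      toLp 2 (screwRotation a b φ *ᵥ screwRotation r⁻¹ 0 s *ᵥ diniProfile v1 v2 v3 r s) := by
  simp only [diniSurface, WithLp.equiv_symm_apply]
  congr 2
  ext i
  fin_cases i <;>
    simp [screwRotation, diniProfile, mulVec, dotProduct, Fin.sum_univ_four, div_eq_inv_mul] <;>
    ring

theorem hasDerivAt_diniSurface_snd (v1 v2 v3 : ℝ → ℝ) (r a b s φ : ℝ) :
    HasDerivAt (fun ψ => diniSurface v1 v2 v3 r a b s ψ)
      (toLp 2 (screwRotation a b φ *ᵥ screwRotation r⁻¹ 0 s *ᵥ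
        screwGenerator a b *ᵥ diniProfile v1 v2 v3 r s)) φ := by
  simp only [diniSurface_eq]
  have := (hasDerivAt_screwRotation_mulVec (a := a) (b := b)
    (hasDerivAt_const φ (screwRotation r⁻¹ 0 s *ᵥ diniProfile v1 v2 v3 r s))).toLp 2
  rwa [add_zero, screwGenerator_mulVec_screwRotation_mulVec] at this

section Dini

variable {v1 v2 v3 : ℝ → ℝ} {v1' v2' v3' r s : ℝ}

theorem hasDerivAt_diniProfile (h1 : HasDerivAt v1 v1' s) (h2 : HasDerivAt v2 v2' s)
    (h3 : HasDerivAt v3 v3' s) :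
    HasDerivAt (diniProfile v1 v2 v3 r) ![-v2', v1', v3', 0] s := by
  rw [hasDerivAt_pi]
  intro i
  fin_cases i
  exacts [h2.const_sub r, h1, h3, hasDerivAt_const s 0]

theorem hasDerivAt_diniSurface_fst (a b φ : ℝ) (h1 : HasDerivAt v1 v1' s)
    (h2 : HasDerivAt v2 v2' s) (h3 : HasDerivAt v3 v3' s) :
    HasDerivAt (fun t => diniSurface v1 v2 v3 r a b t φ)
      (toLp 2 (screwRotation a b φ *ᵥ screwRotation r⁻¹ 0 s *ᵥ
        (screwGenerator r⁻¹ 0 *ᵥ diniProfile v1 v2 v3 r s + ![-v2', v1', v3', 0]))) s := by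
  simp only [diniSurface_eq]
  exact ((hasDerivAt_screwRotation_mulVec
    (hasDerivAt_diniProfile h1 h2 h3)).const_mulVec _).toLp 2

theorem diniSurface_firstFundamentalForm {a b φ : ℝ} {fs fφ : EuclideanSpace ℝ (Fin 4)}
    (h1 : HasDerivAt v1 v1' s) (h2 : HasDerivAt v2 v2' s) (h3 : HasDerivAt v3 v3' s)
    (hfs : HasDerivAt (fun t => diniSurface v1 v2 v3 r a b t φ) fs s)
    (hfφ : HasDerivAt (fun ψ => diniSurface v1 v2 v3 r a b s ψ) fφ φ) :
    inner ℝ fs fs = (v1 s / r + v2') ^ 2 + ((r - v2 s) / r + v1') ^ 2 + v3' ^ 2 ∧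
    inner ℝ fs fφ = a * (v1 s * (v1 s / r + v2') + (r - v2 s) * ((r - v2 s) / r + v1')) ∧
    inner ℝ fφ fφ = a ^ 2 * (v1 s ^ 2 + (r - v2 s) ^ 2) + b ^ 2 * v3 s ^ 2 := by
  rw [hfs.unique (hasDerivAt_diniSurface_fst a b φ h1 h2 h3),
    hfφ.unique (hasDerivAt_diniSurface_snd v1 v2 v3 r a b s φ)]
  simp only [EuclideanSpace.inner_toLp_toLp, star_trivial, dotProduct_screwRotation_mulVec]
  refine ⟨?_, ?_, ?_⟩ <;>
    simp [diniProfile, screwGenerator, mulVec, dotProduct, Fin.sum_univ_four] <;> ring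

end Dini

theorem hasDerivAt_diniSolution {c₁ c₂ c₃ s : ℝ} {Q₀ v1 v2 v3 : ℝ → ℝ}
    (hQ₀ : ∀ t, Q₀ t = c₁ + (t + c₃) ^ 2) (hQ₀s : Q₀ s ≠ 0)
    (hv1 : ∀ t, v1 t = -(2 * (t + c₃)) / Q₀ t) (hv2 : ∀ t, v2 t = 1 - 2 / Q₀ t)
    (hv3 : ∀ t, v3 t = 2 * c₂ / Q₀ t) :
    HasDerivAt v1 ((4 * (s + c₃) ^ 2 - 2 * Q₀ s) / Q₀ s ^ 2) s ∧
      HasDerivAt v2 (4 * (s + c₃) / Q₀ s ^ 2) s ∧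
      HasDerivAt v3 (-(4 * c₂ * (s + c₃)) / Q₀ s ^ 2) s := by
  have hQ₀' : HasDerivAt Q₀ (2 * (s + c₃)) s := by
    rw [funext hQ₀]
    simpa using (((hasDerivAt_id s).add_const c₃).pow 2).const_add c₁
  rw [funext hv1, funext hv2, funext hv3]
  refine ⟨?_, ?_, ?_⟩
  · exact ((((hasDerivAt_id s).add_const c₃).const_mul 2).neg.div hQ₀' hQ₀s).congr_deriv
      (by simp; ring)
  · exact (((hasDerivAt_const s 2).div hQ₀' hQ₀s).const_sub 1).congr_deriv (by ring)
  · exact ((hasDerivAt_const s (2 * c₂)).div hQ₀' hQ₀s).congr_deriv (by ring)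

theorem stmt14_general (c₁ c₂ c₃ a b : ℝ) (hc₁ : c₁ = 1 + c₂ ^ 2)
    (Q₀ v1 v2 v3 P Q : ℝ → ℝ)
    (hQ₀ : ∀ s, Q₀ s = c₁ + (s + c₃) ^ 2)
    (hv1 : ∀ s, v1 s = -(2 * (s + c₃)) / Q₀ s)
    (hv2 : ∀ s, v2 s = 1 - 2 / Q₀ s)
    (hv3 : ∀ s, v3 s = 2 * c₂ / Q₀ s)
    (hP : ∀ s, P s = 4 * (s + c₃) ^ 2 / (Q₀ s) ^ 2)
    (hQ : ∀ s, Q s = 4 * (a ^ 2 + b ^ 2 * c₂ ^ 2) / (Q₀ s) ^ 2)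
    (f : ℝ → ℝ → EuclideanSpace ℝ (Fin 4))
    (hf : f = diniSurface v1 v2 v3 1 a b)
    (fs fφ : ℝ → ℝ → EuclideanSpace ℝ (Fin 4))
    (hfs : ∀ s φ : ℝ, HasDerivAt (fun t => f t φ) (fs s φ) s)
    (hfφ : ∀ s φ : ℝ, HasDerivAt (fun ψ => f s ψ) (fφ s φ) φ)
    (E F G : ℝ → ℝ → ℝ)
    (hE : ∀ s φ : ℝ, E s φ = inner ℝ (fs s φ) (fs s φ))
    (hF : ∀ s φ : ℝ, F s φ = inner ℝ (fs s φ) (fφ s φ))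
    (hG : ∀ s φ : ℝ, G s φ = inner ℝ (fφ s φ) (fφ s φ)) :
    ∀ s φ : ℝ,
      E s φ = P s ∧ F s φ = a * P s ∧ G s φ = a ^ 2 * P s + Q s := by
  intro s φ
  subst hf
  have hQ₀s : Q₀ s ≠ 0 := by rw [hQ₀, hc₁]; positivity
  obtain ⟨h1, h2, h3⟩ := hasDerivAt_diniSolution hQ₀ hQ₀s hv1 hv2 hv3
  obtain ⟨hEs, hFs, hGs⟩ := diniSurface_firstFundamentalForm h1 h2 h3 (hfs s φ) (hfφ s φ)
  rw [hE, hF, hG, hEs, hFs, hGs, hP, hQ, hv1, hv2, hv3]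
  refine ⟨?_, ?_, ?_⟩ <;> field_simp <;> rw [hQ₀, hc₁] <;> ring

theorem stmt14 (c₁ c₂ c₃ a b : ℝ) (hc₁ : c₁ = 1 + c₂ ^ 2)
    (ha : a ≠ 0) (hb : b ≠ 0)
    (Q₀ v1 v2 v3 P Q : ℝ → ℝ)
    (hQ₀ : ∀ s, Q₀ s = c₁ + (s + c₃) ^ 2)
    (hv1 : ∀ s, v1 s = -(2 * (s + c₃)) / Q₀ s)
    (hv2 : ∀ s, v2 s = 1 - 2 / Q₀ s)
    (hv3 : ∀ s, v3 s = 2 * c₂ / Q₀ s)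
    (hP : ∀ s, P s = 4 * (s + c₃) ^ 2 / (Q₀ s) ^ 2)
    (hQ : ∀ s, Q s = 4 * (a ^ 2 + b ^ 2 * c₂ ^ 2) / (Q₀ s) ^ 2)
    (f : ℝ → ℝ → EuclideanSpace ℝ (Fin 4))
    (hf : f = diniSurface v1 v2 v3 1 a b)
    (fs fφ : ℝ → ℝ → EuclideanSpace ℝ (Fin 4))
    (hfs : ∀ s φ : ℝ, HasDerivAt (fun t => f t φ) (fs s φ) s)
    (hfφ : ∀ s φ : ℝ, HasDerivAt (fun ψ => f s ψ) (fφ s φ) φ)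
    (E F G : ℝ → ℝ → ℝ)
    (hE : ∀ s φ : ℝ, E s φ = inner ℝ (fs s φ) (fs s φ))
    (hF : ∀ s φ : ℝ, F s φ = inner ℝ (fs s φ) (fφ s φ))
    (hG : ∀ s φ : ℝ, G s φ = inner ℝ (fφ s φ) (fφ s φ)) :
    ∀ s φ : ℝ,
      E s φ = P s ∧ F s φ = a * P s ∧ G s φ = a ^ 2 * P s + Q s :=
  stmt14_general c₁ c₂ c₃ a b hc₁ Q₀ v1 v2 v3 P Q hQ₀ hv1 hv2 hv3 hP hQ f hf fs fφ hfs hfφ E F G hE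
    hF hG
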